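/- Let G1=(V1,E1,ℓ1), G2=(V2,E2,ℓ2), G3=(V3,E3,ℓ3) be finite acyclic labeled graphs with single-character vertex labels, and let v1∈V1, v2∈V2, v3∈V3 with ℓ1(v1)=ℓ2(v2)≠ℓ3(v3). If v1 and v2 each have at least one in-coming edge, then D(v1,v2,v3) = 1 + max{ D(u1,u2,v3) : (u1,v1)∈E1, (u2,v2)∈E2 } (with the conventions −∞+1=−∞ and max over values that may include −∞). -/

import Mathlib

open List Relation

section Defs

variable {V V1 V2 V3 α : Type*}

/-- A (directed) path: a nonempty list of vertices, consecutive ones joined by edges. -/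
def IsPath (E : V → V → Prop) (p : List V) : Prop :=
  p ≠ [] ∧ p.Chain' E

/-- Paths ending at `v` (the set `P(v)`). -/
def EndsAt (E : V → V → Prop) (v : V) (p : List V) : Prop :=
  IsPath E p ∧ p.getLast? = some v

/-- A path is left-maximal if its first vertex has no in-coming edges. -/
def LeftMax (E : V → V → Prop) (p : List V) : Prop :=
  ∀ w u, p.head? = some w → ¬ E u w

/-- A path is right-maximal if its last vertex has no out-going edges. -/
def RightMax (E : V → V → Prop) (p : List V) : Prop :=
  ∀ w u, p.getLast? = some w → ¬ E w u

/-- `Subseq(ℓ(P(v)))`: subsequences of label strings of paths ending at `v`. -/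
def SubseqAt (E : V → V → Prop) (ℓ : V → α) (v : V) : Set (List α) :=
  {z | ∃ p, EndsAt E v p ∧ z.Sublist (p.map ℓ)}

/-- `Subseq(ℓ(LMP(v)))`: subsequences of label strings of left-maximal paths ending at `v`. -/
def SubseqLM (E : V → V → Prop) (ℓ : V → α) (v : V) : Set (List α) :=
  {z | ∃ p, EndsAt E v p ∧ LeftMax E p ∧ z.Sublist (p.map ℓ)}

/-- `Subseq(G)`: subsequences of label strings of all paths of `G`. -/
def SubseqG (E : V → V → Prop) (ℓ : V → α) : Set (List α) :=
  {z | ∃ p, IsPath E p ∧ z.Sublist (p.map ℓ)}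

/-- A graph is acyclic if no vertex lies on a nonempty cycle. -/
def Acyclic (E : V → V → Prop) : Prop :=
  ∀ v, ¬ Relation.TransGen E v v

/-- The set `S_IC(v1,v2,v3)`. -/
def SIC (E1 : V1 → V1 → Prop) (ℓ1 : V1 → α) (E2 : V2 → V2 → Prop) (ℓ2 : V2 → α)
    (E3 : V3 → V3 → Prop) (ℓ3 : V3 → α) (v1 : V1) (v2 : V2) (v3 : V3) :
    Set (List α) :=
  {z | (∃ q, EndsAt E3 v3 q ∧ LeftMax E3 q ∧ (q.map ℓ3).Sublist z) ∧
       z ∈ SubseqAt E1 ℓ1 v1 ∧ z ∈ SubseqAt E2 ℓ2 v2}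

/-- Maximum length of a string in `S`, with `⊥` (= −∞) for `S = ∅`. -/
noncomputable def maxLen (S : Set (List α)) : WithBot ℕ :=
  sSup ((fun z : List α => (z.length : WithBot ℕ)) '' S)

/-- `L(v1,v2)`: the maximum length of a common subsequence (as a natural number). -/
noncomputable def Lval (E1 : V1 → V1 → Prop) (ℓ1 : V1 → α)
    (E2 : V2 → V2 → Prop) (ℓ2 : V2 → α) (v1 : V1) (v2 : V2) : ℕ :=
  sSup {n | ∃ z ∈ SubseqAt E1 ℓ1 v1 ∩ SubseqAt E2 ℓ2 v2, n = z.length}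

/-- `D(v1,v2,v3)`: the maximum length of a string in `S_IC(v1,v2,v3)`, `−∞` if empty. -/
noncomputable def Dval (E1 : V1 → V1 → Prop) (ℓ1 : V1 → α) (E2 : V2 → V2 → Prop) (ℓ2 : V2 → α)
    (E3 : V3 → V3 → Prop) (ℓ3 : V3 → α) (v1 : V1) (v2 : V2) (v3 : V3) : WithBot ℕ :=
  maxLen (SIC E1 ℓ1 E2 ℓ2 E3 ℓ3 v1 v2 v3)

end Defs

/-! Write `c = ℓ1(v1) = ℓ2(v2)`. A string of `S_IC(v1,v2,v3)` either ends in `c` or stays in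
`S_IC(v1,v2,v3)` when `c` is appended. Removing that final `c` leaves a common subsequence of paths
ending at in-neighbours `u1`, `u2` which still contains the label string of the left-maximal path
to `v3`, since that label string ends in `ℓ3(v3) ≠ c`. Conversely, appending `c` to a string of
`S_IC(u1,u2,v3)` gives a string of `S_IC(v1,v2,v3)`. All lengths are at most `|V1|`, because a path
in the finite acyclic graph `G1` repeats no vertex, so all the maxima are attained. -/

theorem List.sublist_of_sublist_concat_of_getLast?_ne {α : Type*} {w l : List α} {a : α}
    (h : w <+ l ++ [a]) (hw : w.getLast? ≠ some a) : w <+ l := by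
  obtain ⟨w₁, w₂, rfl, h₁, h₂⟩ := List.sublist_append_iff.mp h
  rcases List.sublist_singleton.mp h₂ with rfl | rfl
  · simpa using h₁
  · simp at hw

theorem Acyclic.nodup_of_isChain {V : Type*} {E : V → V → Prop} (hE : Acyclic E) {p : List V}
    (hp : p.IsChain E) : p.Nodup := by
  have : p.Pairwise (TransGen E) :=
    List.isChain_iff_pairwise.mp (hp.imp fun _ _ => TransGen.single)
  exact this.imp fun {a _} hab => by rintro rfl; exact hE a hab

section Paths

variable {V α : Type*} {E : V → V → Prop} {ℓ : V → α} {u v : V}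

theorem endsAt_concat {p : List V} (hp : EndsAt E u p) (huv : E u v) :
    EndsAt E v (p ++ [v]) := by
  obtain ⟨⟨-, hp⟩, hlast⟩ := hp
  refine ⟨⟨by simp, hp.append (List.isChain_singleton v) ?_⟩, by simp⟩
  simp_all

theorem EndsAt.eq_concat {p : List V} (hp : EndsAt E v p) :
    ∃ p', p = p' ++ [v] ∧ (p' = [] ∨ ∃ u, E u v ∧ EndsAt E u p') := by
  obtain ⟨⟨-, hp⟩, hlast⟩ := hp
  obtain ⟨p', rfl⟩ : ∃ p', p = p' ++ [v] := ⟨_, (List.dropLast_append_getLast? v hlast).symm⟩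
  refine ⟨p', rfl, ?_⟩
  rcases p'.eq_nil_or_concat with rfl | ⟨p'', u, rfl⟩
  · exact .inl rfl
  · refine .inr ⟨u, ?_, ⟨⟨by simp, hp.left_of_append⟩, by simp⟩⟩
    simpa using hp.rel_getLast_head_of_append (by simp) (by simp)

theorem length_le_card_of_mem_subseqAt [Fintype V] (hE : Acyclic E) {z : List α}
    (hz : z ∈ SubseqAt E ℓ v) : z.length ≤ Fintype.card V := by
  obtain ⟨p, ⟨⟨-, hp⟩, -⟩, hzp⟩ := hz
  calc z.length ≤ (p.map ℓ).length := hzp.length_le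
    _ = p.length := p.length_map ℓ
    _ ≤ Fintype.card V := (hE.nodup_of_isChain hp).length_le_card

theorem concat_mem_subseqAt_iff {y : List α} (hy : y ≠ []) :
    y ++ [ℓ v] ∈ SubseqAt E ℓ v ↔ ∃ u, E u v ∧ y ∈ SubseqAt E ℓ u := by
  constructor
  · rintro ⟨p, hp, hyp⟩
    obtain ⟨p', rfl, rfl | ⟨u, huv, hp'⟩⟩ := hp.eq_concat
    · simp_all
    · exact ⟨u, huv, p', hp', by simpa using hyp⟩
  · rintro ⟨u, huv, p, hp, hyp⟩
    exact ⟨p ++ [v], endsAt_concat hp huv, by simpa using hyp⟩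

theorem concat_mem_subseqAt_of_getLast?_ne {z : List α} (hz : z ∈ SubseqAt E ℓ v)
    (hlast : z.getLast? ≠ some (ℓ v)) : z ++ [ℓ v] ∈ SubseqAt E ℓ v := by
  obtain ⟨p, hp, hzp⟩ := hz
  obtain ⟨p', rfl, -⟩ := hp.eq_concat
  refine ⟨p' ++ [v], hp, ?_⟩
  simpa using List.sublist_of_sublist_concat_of_getLast?_ne (by simpa using hzp) hlast

end Paths

section MaxLen

variable {α : Type*} {S T : Set (List α)} {N : ℕ}

theorem bddAbove_image_length (hS : ∀ z ∈ S, z.length ≤ N) :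
    BddAbove ((fun z : List α => (z.length : WithBot ℕ)) '' S) :=
  ⟨N, by rintro _ ⟨z, hz, rfl⟩; exact WithBot.coe_le_coe.2 (hS z hz)⟩

theorem le_maxLen (hS : ∀ z ∈ S, z.length ≤ N) {z : List α} (hz : z ∈ S) :
    (z.length : WithBot ℕ) ≤ maxLen S :=
  le_csSup (bddAbove_image_length hS) ⟨z, hz, rfl⟩

theorem maxLen_le {b : WithBot ℕ} (h : ∀ z ∈ S, (z.length : WithBot ℕ) ≤ b) : maxLen S ≤ b :=
  csSup_le' (by rintro _ ⟨z, hz, rfl⟩; exact h z hz)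

theorem exists_length_eq_maxLen (hS : ∀ z ∈ S, z.length ≤ N) (hne : S.Nonempty) :
    ∃ z ∈ S, (z.length : WithBot ℕ) = maxLen S :=
  (hne.image _).csSup_mem (bddAbove_image_length hS).finite

theorem one_add_maxLen_le {a : α} (hS : ∀ z ∈ S, z.length ≤ N) (h : ∀ y ∈ T, y ++ [a] ∈ S) :
    1 + maxLen T ≤ maxLen S := by
  rcases T.eq_empty_or_nonempty with rfl | hne
  · simp [maxLen]
  have hT : ∀ y ∈ T, y.length ≤ N :=
    fun y hy => (Nat.le_succ _).trans (by simpa using hS _ (h y hy))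
  obtain ⟨y, hy, hlen⟩ := exists_length_eq_maxLen hT hne
  rw [← hlen]
  simpa [add_comm] using le_maxLen hS (h y hy)

end MaxLen

section SIC

variable {V1 V2 V3 α : Type*} {E1 : V1 → V1 → Prop} {ℓ1 : V1 → α} {E2 : V2 → V2 → Prop}
  {ℓ2 : V2 → α} {E3 : V3 → V3 → Prop} {ℓ3 : V3 → α} {v1 : V1} {v2 : V2} {v3 : V3}

theorem length_le_card_of_mem_sic [Fintype V1] (h1 : Acyclic E1) {z : List α}
    (hz : z ∈ SIC E1 ℓ1 E2 ℓ2 E3 ℓ3 v1 v2 v3) : z.length ≤ Fintype.card V1 :=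
  length_le_card_of_mem_subseqAt h1 hz.2.1

theorem ne_nil_of_mem_sic {z : List α} (hz : z ∈ SIC E1 ℓ1 E2 ℓ2 E3 ℓ3 v1 v2 v3) : z ≠ [] := by
  obtain ⟨⟨q, ⟨⟨hq, -⟩, -⟩, -, hqz⟩, -⟩ := hz
  rintro rfl
  simp_all

theorem concat_mem_sic_iff (hl12 : ℓ1 v1 = ℓ2 v2) (hl3 : ℓ2 v2 ≠ ℓ3 v3) {y : List α} :
    y ++ [ℓ1 v1] ∈ SIC E1 ℓ1 E2 ℓ2 E3 ℓ3 v1 v2 v3 ↔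
      ∃ u1 u2, E1 u1 v1 ∧ E2 u2 v2 ∧ y ∈ SIC E1 ℓ1 E2 ℓ2 E3 ℓ3 u1 u2 v3 := by
  constructor
  · rintro ⟨⟨q, hq, hqlm, hqyc⟩, hy1, hy2⟩
    have hqlast : (q.map ℓ3).getLast? = some (ℓ3 v3) := by simp [List.getLast?_map, hq.2]
    have hqy : q.map ℓ3 <+ y :=
      List.sublist_of_sublist_concat_of_getLast?_ne hqyc (by simpa [hqlast, hl12] using hl3.symm)
    have hy : y ≠ [] := by
      rintro rfl
      simp_all
    obtain ⟨u1, he1, hy1⟩ := (concat_mem_subseqAt_iff hy).1 hy1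
    obtain ⟨u2, he2, hy2⟩ := (concat_mem_subseqAt_iff hy).1 (hl12 ▸ hy2)
    exact ⟨u1, u2, he1, he2, ⟨q, hq, hqlm, hqy⟩, hy1, hy2⟩
  · rintro ⟨u1, u2, he1, he2, hy⟩
    have hy' := ne_nil_of_mem_sic hy
    obtain ⟨⟨q, hq, hqlm, hqy⟩, hy1, hy2⟩ := hy
    refine ⟨⟨q, hq, hqlm, hqy.trans (List.sublist_append_left _ _)⟩, ?_, ?_⟩
    · exact (concat_mem_subseqAt_iff hy').2 ⟨u1, he1, hy1⟩
    · exact hl12 ▸ (concat_mem_subseqAt_iff hy').2 ⟨u2, he2, hy2⟩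

theorem exists_concat_mem_sic (hl12 : ℓ1 v1 = ℓ2 v2) {z : List α}
    (hz : z ∈ SIC E1 ℓ1 E2 ℓ2 E3 ℓ3 v1 v2 v3) :
    ∃ y, y ++ [ℓ1 v1] ∈ SIC E1 ℓ1 E2 ℓ2 E3 ℓ3 v1 v2 v3 ∧ z.length ≤ y.length + 1 := by
  by_cases hlast : z.getLast? = some (ℓ1 v1)
  · refine ⟨z.dropLast, by rwa [List.dropLast_append_getLast? _ hlast], ?_⟩
    simp only [List.length_dropLast]
    omega
  · obtain ⟨⟨q, hq, hqlm, hqz⟩, hz1, hz2⟩ := hz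
    refine ⟨z, ⟨⟨q, hq, hqlm, hqz.trans (List.sublist_append_left _ _)⟩, ?_, ?_⟩, by omega⟩
    · exact concat_mem_subseqAt_of_getLast?_ne hz1 hlast
    · exact hl12 ▸ concat_mem_subseqAt_of_getLast?_ne hz2 (hl12 ▸ hlast)

end SIC

theorem stmt12_general {V1 V2 V3 α : Type*} [Fintype V1]
    (E1 : V1 → V1 → Prop) (ℓ1 : V1 → α) (E2 : V2 → V2 → Prop) (ℓ2 : V2 → α)
    (E3 : V3 → V3 → Prop) (ℓ3 : V3 → α)
    (h1 : Acyclic E1)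
    (v1 : V1) (v2 : V2) (v3 : V3)
    (hl12 : ℓ1 v1 = ℓ2 v2) (hl3 : ℓ2 v2 ≠ ℓ3 v3)
    (hv1 : ∃ u, E1 u v1) (hv2 : ∃ u, E2 u v2) :
    Dval E1 ℓ1 E2 ℓ2 E3 ℓ3 v1 v2 v3 =
      1 + sSup {d : WithBot ℕ | ∃ u1 u2, E1 u1 v1 ∧ E2 u2 v2 ∧
        d = Dval E1 ℓ1 E2 ℓ2 E3 ℓ3 u1 u2 v3} := by
  have hN : ∀ u1 u2, ∀ z ∈ SIC E1 ℓ1 E2 ℓ2 E3 ℓ3 u1 u2 v3, z.length ≤ Fintype.card V1 :=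
    fun _ _ _ => length_le_card_of_mem_sic h1
  set T := {d : WithBot ℕ | ∃ u1 u2, E1 u1 v1 ∧ E2 u2 v2 ∧
    d = Dval E1 ℓ1 E2 ℓ2 E3 ℓ3 u1 u2 v3}
  have hT : BddAbove T := ⟨Fintype.card V1, by
    rintro _ ⟨u1, u2, -, -, rfl⟩
    exact maxLen_le fun z hz => by exact_mod_cast hN u1 u2 z hz⟩
  apply le_antisymm
  · refine maxLen_le fun z hz => ?_
    obtain ⟨y, hy, hzy⟩ := exists_concat_mem_sic hl12 hz
    obtain ⟨u1, u2, he1, he2, hyu⟩ := (concat_mem_sic_iff hl12 hl3).1 hy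
    calc (z.length : WithBot ℕ) ≤ 1 + (y.length : WithBot ℕ) := by
          exact_mod_cast (by omega : z.length ≤ 1 + y.length)
      _ ≤ 1 + sSup T := by
          gcongr
          exact (le_maxLen (hN u1 u2) hyu).trans (le_csSup hT ⟨u1, u2, he1, he2, rfl⟩)
  · obtain ⟨w1, hw1⟩ := hv1
    obtain ⟨w2, hw2⟩ := hv2
    have hTne : T.Nonempty := ⟨_, w1, w2, hw1, hw2, rfl⟩
    obtain ⟨u1, u2, he1, he2, hD⟩ := hTne.csSup_mem hT.finite
    rw [hD]
    exact one_add_maxLen_le (hN v1 v2)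
      fun y hy => (concat_mem_sic_iff hl12 hl3).2 ⟨u1, u2, he1, he2, hy⟩

/-- In finite acyclic graphs with `ℓ1(v1) = ℓ2(v2) ≠ ℓ3(v3)`:
if `v1` and `v2` each have an in-coming edge, then
`D(v1,v2,v3) = 1 + max{ D(u1,u2,v3) : (u1,v1) ∈ E1, (u2,v2) ∈ E2 }`
(with the convention `−∞ + 1 = −∞`). -/
theorem stmt12 {V1 V2 V3 α : Type*} [Fintype V1] [Fintype V2] [Fintype V3]
    (E1 : V1 → V1 → Prop) (ℓ1 : V1 → α) (E2 : V2 → V2 → Prop) (ℓ2 : V2 → α)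
    (E3 : V3 → V3 → Prop) (ℓ3 : V3 → α)
    (h1 : Acyclic E1) (h2 : Acyclic E2) (h3 : Acyclic E3)
    (v1 : V1) (v2 : V2) (v3 : V3)
    (hl12 : ℓ1 v1 = ℓ2 v2) (hl3 : ℓ2 v2 ≠ ℓ3 v3)
    (hv1 : ∃ u, E1 u v1) (hv2 : ∃ u, E2 u v2) :
    Dval E1 ℓ1 E2 ℓ2 E3 ℓ3 v1 v2 v3 =
      1 + sSup {d : WithBot ℕ | ∃ u1 u2, E1 u1 v1 ∧ E2 u2 v2 ∧
        d = Dval E1 ℓ1 E2 ℓ2 E3 ℓ3 u1 u2 v3} :=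
  stmt12_general E1 ℓ1 E2 ℓ2 E3 ℓ3 h1 v1 v2 v3 hl12 hl3 hv1 hv2
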